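/- arXiv:math/9912195 — 3 statements merged into one kernel-verified Lean document; each statement's English description precedes it below -/
import Mathlib

section
/- If a field a(z) = ∑ a_{(n)} z^{-n-1} and b(z) = ∑ b_{(n)} z^{-n-1} with coefficients in End(V) satisfy the locality condition (z-w)^N [a(z), b(w)] = 0 as a formal distribution identity, then the commutator [a_{(m)}, b_{(n)}] can be expressed as a finite sum: [a_{(m)}, b_{(n)}] = ∑_{j=0}^{N-1} binom(m, j) (a_{(j)}b)_{(m+n-j)}, where (a_{(j)}b)(w) are the fields appearing in the singular part of the OPE. -/
/-- Generalized binomial coefficient `binom(m, j)` for an integer `m`, as a complex number. -/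
noncomputable def intChoose (m : ℤ) (j : ℕ) : ℂ :=
  (∏ i ∈ Finset.range j, ((m : ℂ) - i)) / (j.factorial : ℂ)

lemma intChoose_zero (m : ℤ) : intChoose m 0 = 1 := by simp [intChoose]

lemma intChoose_zero_succ (j : ℕ) : intChoose 0 (j + 1) = 0 := by
  unfold intChoose
  rw [Finset.prod_eq_zero (Finset.mem_range.2 (Nat.succ_pos j)) (by simp), zero_div]

lemma intChoose_pascal (m : ℤ) (j : ℕ) :
    intChoose (m + 1) (j + 1) = intChoose m (j + 1) + intChoose m j := by
  unfold intChoose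
  have h1 : ∏ i ∈ Finset.range (j + 1), (((m + 1 : ℤ) : ℂ) - i)
      = (∏ i ∈ Finset.range j, ((m : ℂ) - i)) * ((m : ℂ) + 1) := by
    rw [Finset.prod_range_succ']
    congr 1
    · exact Finset.prod_congr rfl fun i _ => by push_cast; ring
    · push_cast; ring
  have h2 : ∏ i ∈ Finset.range (j + 1), ((m : ℂ) - i)
      = (∏ i ∈ Finset.range j, ((m : ℂ) - i)) * ((m : ℂ) - j) :=
    Finset.prod_range_succ _ _
  rw [h1, h2, Nat.factorial_succ]
  have hj : (j.factorial : ℂ) ≠ 0 := Nat.cast_ne_zero.2 j.factorial_ne_zero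
  have hj1 : ((j : ℂ) + 1) ≠ 0 := Nat.cast_add_one_ne_zero j
  field_simp
  push_cast; ring

/-- Newton's forward-difference formula for functions `ℤ → M` whose `N`-th forward
difference vanishes identically. -/
lemma newton_formula {M : Type*} [AddCommGroup M] [Module ℂ M] :
    ∀ (N : ℕ) (f : ℤ → M), (∀ p : ℤ, (fwdDiff 1)^[N] f p = 0) →
      ∀ m : ℤ, f m = ∑ j ∈ Finset.range N, intChoose m j • (fwdDiff 1)^[j] f 0 := by
  intro N
  induction N with
  | zero => intro f hf m; simpa using hf m
  | succ N IH =>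
    intro f hf m
    have hΔ : ∀ p : ℤ, (fwdDiff 1)^[N] (fwdDiff 1 f) p = 0 := by
      intro p
      have := hf p
      rwa [Function.iterate_succ_apply] at this
    have hIH := IH (fwdDiff 1 f) hΔ
    set X : ℕ → M := fun j => (fwdDiff 1)^[j] f 0 with hX
    set D : ℤ → M := fun k => f k - ∑ j ∈ Finset.range (N + 1), intChoose k j • X j with hDdef
    have hstep : ∀ k : ℤ, D (k + 1) = D k := by
      intro k
      have hsum : ∑ j ∈ Finset.range (N + 1), intChoose (k + 1) j • X j
          = ∑ j ∈ Finset.range (N + 1), intChoose k j • X j + (f (k + 1) - f k) := by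
        have e1 : ∑ j ∈ Finset.range (N + 1), intChoose (k + 1) j • X j
            = ∑ j ∈ Finset.range N, intChoose (k + 1) (j + 1) • X (j + 1)
              + intChoose (k + 1) 0 • X 0 := Finset.sum_range_succ' _ _
        have e2 : ∑ j ∈ Finset.range (N + 1), intChoose k j • X j
            = ∑ j ∈ Finset.range N, intChoose k (j + 1) • X (j + 1)
              + intChoose k 0 • X 0 := Finset.sum_range_succ' _ _
        have e3 : f (k + 1) - f k
            = ∑ j ∈ Finset.range N, intChoose k j • X (j + 1) := by
          have := hIH k
          simp only [fwdDiff] at this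
          rw [this]
          refine Finset.sum_congr rfl fun j _ => ?_
          rw [hX]
          rw [← Function.iterate_succ_apply]
        rw [e1, e2, e3]
        simp only [intChoose_pascal, add_smul, intChoose_zero]
        rw [Finset.sum_add_distrib]
        abel
      simp only [hDdef]
      rw [hsum]
      abel
    have hconst : ∀ k : ℤ, D k = D 0 := by
      intro k
      induction k using Int.induction_on with
      | zero => rfl
      | succ i ih => rw [hstep i, ih]
      | pred i ih =>
        have h := hstep (-(i + 1))
        rw [show (-(i + 1 : ℤ) + 1) = -(i : ℤ) by ring] at h
        rw [show (-(i : ℤ) - 1) = -((i : ℤ) + 1) by ring]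
        exact h.symm.trans ih
    have hD0 : D 0 = 0 := by
      simp only [hDdef]
      rw [Finset.sum_range_succ']
      simp only [intChoose_zero_succ, intChoose_zero, zero_smul, one_smul,
        Finset.sum_const_zero, zero_add]
      simp [hX]
    have := (hconst m).trans hD0
    simp only [hDdef, sub_eq_zero] at this
    exact this

/-- **Borcherds commutator formula from locality.**
If the fields `a(z) = ∑ a_{(n)} z^{-n-1}` and `b(z) = ∑ b_{(n)} z^{-n-1}` (with coefficients
in `End V`, satisfying the field truncation condition) are mutually local with locality bound
`N`, i.e. `(z-w)^N [a(z), b(w)] = 0` as a formal distribution identity (stated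
coefficient-wise), then there exist fields `c^j` (`0 ≤ j < N`), the OPE coefficient fields,
such that `[a_{(m)}, b_{(n)}] = ∑_{j=0}^{N-1} binom(m, j) (c^j)_{(m+n-j)}`. -/
theorem borcherds_commutator_formula_of_locality
    (V : Type*) [AddCommGroup V] [Module ℂ V]
    (a b : ℤ → Module.End ℂ V)
    (ha : ∀ v : V, ∃ n₀ : ℤ, ∀ n ≥ n₀, a n v = 0)
    (hb : ∀ v : V, ∃ n₀ : ℤ, ∀ n ≥ n₀, b n v = 0)
    (N : ℕ)
    (hloc : ∀ p q : ℤ,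
      ∑ i ∈ Finset.range (N + 1),
        ((-1 : ℂ) ^ i * (N.choose i : ℂ)) • ⁅a (p + N - i), b (q + i)⁆ = 0) :
    ∃ c : ℕ → ℤ → Module.End ℂ V,
      (∀ j : ℕ, ∀ v : V, ∃ n₀ : ℤ, ∀ n ≥ n₀, c j n v = 0) ∧
      ∀ m n : ℤ,
        ⁅a m, b n⁆ = ∑ j ∈ Finset.range N, intChoose m j • c j (m + n - j) := by
  classical
  -- The OPE coefficient fields
  refine ⟨fun j n => ∑ s ∈ Finset.range (j + 1),
      ((-1 : ℂ) ^ s * (j.choose s : ℂ)) • ⁅a ((j : ℤ) - s), b (n + s)⁆, ?_, ?_⟩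
  · -- field (truncation) property
    intro j v
    choose nb hnb using hb
    refine ⟨max (nb v) ((Finset.range (j + 1)).sup' Finset.nonempty_range_add_one
      (fun s => nb (a ((j : ℤ) - s) v))), fun n hn => ?_⟩
    rw [LinearMap.sum_apply]
    refine Finset.sum_eq_zero fun s hs => ?_
    have hs' : (s : ℤ) ≥ 0 := Int.ofNat_nonneg s
    have h1 : b (n + s) v = 0 := by
      refine hnb v _ ?_
      have := le_trans (le_max_left _ _) hn
      omega
    have h2 : b (n + s) (a ((j : ℤ) - s) v) = 0 := by
      refine hnb _ _ ?_
      have h3 : nb (a ((j : ℤ) - s) v) ≤ (Finset.range (j + 1)).sup'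
          Finset.nonempty_range_add_one (fun s => nb (a ((j : ℤ) - s) v)) :=
        Finset.le_sup' (fun s : ℕ => nb (a ((j : ℤ) - s) v)) hs
      have := le_trans (le_max_right _ _) hn
      omega
    simp [Ring.lie_def, Module.End.mul_apply, h1, h2]
  · -- the commutator formula
    intro m n
    set g : ℤ → Module.End ℂ V := fun k => ⁅a k, b (m + n - k)⁆ with hg
    have hΔ : ∀ p : ℤ, (fwdDiff 1)^[N] g p = 0 := by
      intro p
      rw [fwdDiff_iter_eq_sum_shift]
      have hl := hloc p (m + n - p - N)
      rw [← Finset.sum_range_reflect] at hl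
      rw [← hl]
      refine Finset.sum_congr rfl fun k hk => ?_
      have hk' : k ≤ N := by
        have := Finset.mem_range.1 hk; omega
      have e0 : N + 1 - 1 - k = N - k := by omega
      rw [e0, Nat.choose_symm hk']
      have e1 : p + (N : ℤ) - ((N - k : ℕ) : ℤ) = p + k • (1 : ℤ) := by
        rw [Nat.cast_sub hk']; simp only [nsmul_eq_mul, mul_one]; push_cast; ring
      have e2 : m + n - p - (N : ℤ) + ((N - k : ℕ) : ℤ) = m + n - (p + k • (1 : ℤ)) := by
        rw [Nat.cast_sub hk']; simp only [nsmul_eq_mul, mul_one]; push_cast; ring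
      rw [e1, e2]
      rw [show ((-1 : ℂ) ^ (N - k) * (N.choose k : ℂ))
          = (((-1 : ℤ) ^ (N - k) * (N.choose k : ℤ) : ℤ) : ℂ) by push_cast; ring,
        Int.cast_smul_eq_zsmul]
    have hnew := newton_formula N g hΔ m
    have hgm : g m = ⁅a m, b n⁆ := by simp [hg]
    rw [hgm] at hnew
    rw [hnew]
    refine Finset.sum_congr rfl fun j hj => ?_
    congr 1
    -- Δ^[j] g 0 = c j (m + n - j)
    rw [fwdDiff_iter_eq_sum_shift]
    rw [← Finset.sum_range_reflect]
    refine Finset.sum_congr rfl fun k hk => ?_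
    have hk' : k ≤ j := by
      have := Finset.mem_range.1 hk; omega
    rw [show j + 1 - 1 - k = j - k from by omega, show j - (j - k) = k from by omega,
      Nat.choose_symm hk']
    have e1 : (0 : ℤ) + (j - k) • (1 : ℤ) = (j : ℤ) - (k : ℤ) := by
      simp only [nsmul_eq_mul, mul_one, zero_add]
      rw [Nat.cast_sub hk']
    rw [e1]
    simp only [hg]
    rw [show m + n - ((j : ℤ) - (k : ℤ)) = m + n - (j : ℤ) + (k : ℤ) from by ring]
    rw [show ((-1 : ℂ) ^ k * (j.choose k : ℂ))
        = (((-1 : ℤ) ^ k * (j.choose k : ℤ) : ℤ) : ℂ) by push_cast; ring,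
      Int.cast_smul_eq_zsmul]
end

section
/- Let A be the associative unital ℂ-algebra generated by elements d[n], n ∈ ℤ, subject to the relations d[m]d[n] - d[n]d[m] = m δ_{m+n,0}. Then in the Fock representation V = ℂ[d[-1], d[-2], ...] (creators act by multiplication, d[0] acts by zero, and annihilators d[n] for n > 0 act as n ∂/∂(d[-n])), the operators L[n] := (1/2) ∑_{k ∈ ℤ} :d[k]d[n-k]: satisfy the Virasoro relations [L[m], L[n]] = (m-n)L[m+n] + (1/12)(m³-m)δ_{m+n,0} with central charge 1. -/
open MvPolynomial

/-- The Fock space of one free boson: polynomials in the variables `d[-1], d[-2], ...`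
(the variable indexed by `k : ℕ+` corresponds to `d[-k]`). -/
abbrev FockSpace := MvPolynomial ℕ+ ℂ

/-- The action of the Heisenberg generator `d[n]` on the Fock space:
for `n > 0` it acts as the annihilator `n ∂/∂(d[-n])`, for `n < 0` as multiplication by the
variable `d[n]`, and `d[0]` acts by zero.  These operators satisfy
`[d[m], d[n]] = m δ_{m+n,0}`. -/
noncomputable def dOp (n : ℤ) : Module.End ℂ FockSpace :=
  if hn : 0 < n then
    (n : ℂ) • (MvPolynomial.pderiv (⟨n.toNat, by omega⟩ : ℕ+)).toLinearMap
  else if hn' : n < 0 then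
    LinearMap.mulLeft ℂ (MvPolynomial.X (⟨(-n).toNat, by omega⟩ : ℕ+))
  else 0

/-- The normal ordered product `:d[m]d[n]:`, putting the annihilator to the right:
`:d[m]d[n]: = d[m]d[n]` if `n ≥ 0` and `d[n]d[m]` if `n < 0`. -/
noncomputable def normOrd (m n : ℤ) : Module.End ℂ FockSpace :=
  if 0 ≤ n then dOp m ∘ₗ dOp n else dOp n ∘ₗ dOp m

/-- The Virasoro operator `L[n] = (1/2) ∑_{k ∈ ℤ} :d[k]d[n-k]:`, applied to a vector.
On any given vector only finitely many summands are nonzero, so the sum is a `finsum`. -/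
noncomputable def Lop (n : ℤ) (v : FockSpace) : FockSpace :=
  (2 : ℂ)⁻¹ • ∑ᶠ k : ℤ, normOrd k (n - k) v

lemma pderiv_pderiv_comm (i j : ℕ+) (f : FockSpace) :
    pderiv i (pderiv j f) = pderiv j (pderiv i f) := by
  induction f using MvPolynomial.induction_on with
  | C a => simp
  | add p q hp hq => simp [hp, hq]
  | mul_X p k ih =>
      by_cases hik : i = k <;> by_cases hjk : j = k <;> subst_vars <;>
        simp_all [pderiv_mul, pderiv_X, Pi.single_apply] <;> try ring

lemma dOp_of_pos {a : ℤ} (ha : 0 < a) (v : FockSpace) :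
    dOp a v = (a : ℂ) • pderiv (σ := ℕ+) (⟨a.toNat, by omega⟩ : ℕ+) v := by
  simp only [dOp, dif_pos ha]; rfl

lemma dOp_of_neg {a : ℤ} (ha : a < 0) (v : FockSpace) :
    dOp a v = (MvPolynomial.X (σ := ℕ+) (⟨(-a).toNat, by omega⟩ : ℕ+) : FockSpace) * v := by
  simp only [dOp, dif_neg (show ¬ 0 < a by omega), dif_pos ha]; rfl

lemma dOp_zero' : dOp 0 = 0 := by
  simp [dOp]

lemma dOp_zero (v : FockSpace) : dOp 0 v = 0 := by
  rw [dOp_zero']; rfl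

lemma dOp_comm (a b : ℤ) (v : FockSpace) :
    dOp a (dOp b v) = dOp b (dOp a v) + (if a + b = 0 then (a : ℂ) else 0) • v := by
  have key : ∀ x y : ℤ, 0 < x → y < 0 → ∀ w : FockSpace,
      dOp x (dOp y w) = dOp y (dOp x w) + (if x + y = 0 then (x : ℂ) else 0) • w := by
    intro x y hx hy w
    rw [dOp_of_neg hy, dOp_of_neg hy, dOp_of_pos hx, dOp_of_pos hx]
    erw [pderiv_mul]
    by_cases hxy : x + y = 0
    · have : (⟨(-y).toNat, by omega⟩ : ℕ+) = (⟨x.toNat, by omega⟩ : ℕ+) := by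
        ext; simp; omega
      rw [if_pos hxy]
      rw [show pderiv (σ := ℕ+) (⟨x.toNat, by omega⟩ : ℕ+)
          ((MvPolynomial.X (σ := ℕ+) (⟨(-y).toNat, by omega⟩ : ℕ+) : FockSpace)) = 1 from by
        rw [this]; exact pderiv_X_self _]
      rw [smul_add, one_mul, mul_smul_comm]
      rw [add_comm]
    · have hne : (⟨(-y).toNat, by omega⟩ : ℕ+) ≠ (⟨x.toNat, by omega⟩ : ℕ+) := by
        intro h
        have := congrArg (fun t : ℕ+ => (t : ℕ)) h
        simp at this
        omega
      erw [pderiv_X_of_ne (σ := ℕ+) hne]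
      rw [if_neg hxy, zero_smul, add_zero, zero_mul, zero_add,
        mul_smul_comm]
  rcases lt_trichotomy a 0 with ha | ha | ha
  · rcases lt_trichotomy b 0 with hb | hb | hb
    · rw [dOp_of_neg ha, dOp_of_neg hb, dOp_of_neg hb, dOp_of_neg ha,
        if_neg (show ¬ (a + b = 0) by omega), zero_smul, add_zero]
      ring
    · subst hb
      simp [dOp_zero', map_zero, show a ≠ 0 by omega]
    · have h := key b a hb ha v
      rw [h, add_assoc, ← add_smul]
      have hz : (if b + a = 0 then (b : ℂ) else 0) + (if a + b = 0 then (a : ℂ) else 0) = 0 := by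
        by_cases h0 : a + b = 0
        · rw [if_pos h0, if_pos (show b + a = 0 by omega), ← Int.cast_add]
          rw [show b + a = 0 by omega]
          simp
        · rw [if_neg h0, if_neg (show ¬ b + a = 0 by omega), add_zero]
      rw [hz, zero_smul, add_zero]
  · subst ha
    simp [dOp_zero', map_zero]
  · rcases lt_trichotomy b 0 with hb | hb | hb
    · exact key a b ha hb v
    · subst hb
      simp [dOp_zero', map_zero, show a ≠ 0 by omega]
    · rw [dOp_of_pos ha, dOp_of_pos hb, dOp_of_pos hb, dOp_of_pos ha,
        if_neg (show ¬ (a + b = 0) by omega), zero_smul, add_zero]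
      simp only [Derivation.map_smul]
      have h := pderiv_pderiv_comm (⟨a.toNat, by omega⟩ : ℕ+) (⟨b.toNat, by omega⟩ : ℕ+) v
      rw [smul_comm]
      exact congrArg _ (congrArg _ h)
noncomputable def cc (a b : ℤ) : ℂ := if a + b = 0 ∧ b < 0 then (a : ℂ) else 0

lemma normOrd_apply_of_nonneg {a b : ℤ} (hb : 0 ≤ b) (v : FockSpace) :
    normOrd a b v = dOp a (dOp b v) := by
  rw [normOrd, if_pos hb]; rfl

lemma normOrd_apply_of_neg {a b : ℤ} (hb : b < 0) (v : FockSpace) :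
    normOrd a b v = dOp b (dOp a v) := by
  rw [normOrd, if_neg (by omega)]; rfl

lemma dOp_dOp_eq (a b : ℤ) (v : FockSpace) :
    dOp a (dOp b v) = normOrd a b v + cc a b • v := by
  by_cases hb : 0 ≤ b
  · rw [normOrd_apply_of_nonneg hb, cc, if_neg (by omega), zero_smul, add_zero]
  · push_neg at hb
    rw [normOrd_apply_of_neg hb, dOp_comm a b v]
    by_cases h0 : a + b = 0 <;> simp [cc, h0, hb]

lemma normOrd_symm (a b : ℤ) (v : FockSpace) : normOrd a b v = normOrd b a v := by
  by_cases hb : 0 ≤ b <;> by_cases ha : 0 ≤ a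
  · rw [normOrd_apply_of_nonneg hb, normOrd_apply_of_nonneg ha, dOp_comm a b v]
    have : (if a + b = 0 then (a:ℂ) else 0) = 0 := by
      by_cases h0 : a + b = 0
      · rw [if_pos h0, show a = 0 by omega]; simp
      · rw [if_neg h0]
    rw [this, zero_smul, add_zero]
  · rw [normOrd_apply_of_nonneg hb, normOrd_apply_of_neg (by omega : a < 0)]
  · rw [normOrd_apply_of_neg (by omega : b < 0), normOrd_apply_of_nonneg ha]
  · rw [normOrd_apply_of_neg (by omega : b < 0), normOrd_apply_of_neg (by omega : a < 0),
      dOp_comm b a v, if_neg (by omega), zero_smul, add_zero]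

def Bd (C : ℤ) (v : FockSpace) : Prop := ∀ j : ℤ, C < j → dOp j v = 0

lemma Bd.mono {C C' : ℤ} {v : FockSpace} (h : Bd C v) (hle : C ≤ C') : Bd C' v :=
  fun j hj => h j (by omega)

lemma Bd.zero (C : ℤ) : Bd C (0 : FockSpace) := fun _ _ => map_zero _

lemma Bd.smul {C : ℤ} {v : FockSpace} (h : Bd C v) (c : ℂ) : Bd C (c • v) :=
  fun j hj => by rw [map_smul, h j hj, smul_zero]

lemma Bd.sum {ι : Type*} {T : Finset ι} {f : ι → FockSpace} {C : ℤ}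
    (h : ∀ i ∈ T, Bd C (f i)) : Bd C (∑ i ∈ T, f i) := fun j hj => by
  rw [map_sum]
  exact Finset.sum_eq_zero fun i hi => h i hi j hj

lemma Bd.dOp {C : ℤ} {v : FockSpace} (h : Bd C v) (a : ℤ) :
    Bd (max C (-a)) (dOp a v) := by
  intro j hj
  have h1 : C < j := lt_of_le_of_lt (le_max_left _ _) hj
  have h2 : -a < j := lt_of_le_of_lt (le_max_right _ _) hj
  rw [dOp_comm j a v, h j h1, map_zero, zero_add, if_neg (by omega), zero_smul]

lemma Bd.normOrd {C : ℤ} {v : FockSpace} (h : Bd C v) (a b : ℤ) :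
    Bd (max (max C (-b)) (-a)) (normOrd a b v) := by
  by_cases hb : 0 ≤ b
  · exact (normOrd_apply_of_nonneg hb v) ▸ ((h.dOp b).dOp a)
  · push_neg at hb
    have h2 := (h.dOp a).dOp b
    rw [show max (max C (-a)) (-b) = max (max C (-b)) (-a) by
      rw [max_assoc, max_comm (-a) (-b), ← max_assoc]] at h2
    exact (normOrd_apply_of_neg hb v) ▸ h2

lemma normOrd_eq_zero {C : ℤ} {v : FockSpace} (h : Bd C v) (hC : 0 ≤ C) {n k : ℤ}
    (hk : k < n - C ∨ max C n < k) : normOrd k (n - k) v = 0 := by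
  rcases hk with hk | hk
  · rw [normOrd_apply_of_nonneg (by omega : (0:ℤ) ≤ n - k), h (n - k) (by omega), map_zero]
  · have h1 : C < k := lt_of_le_of_lt (le_max_left _ _) hk
    have h2 : n < k := lt_of_le_of_lt (le_max_right _ _) hk
    rw [normOrd_apply_of_neg (show n - k < 0 by omega), h k h1, map_zero]

lemma Lop_eq_sum {C : ℤ} {v : FockSpace} (h : Bd C v) (hC : 0 ≤ C) (n : ℤ) {S : Finset ℤ}
    (hS : Finset.Icc (n - C) (max C n) ⊆ S) :
    Lop n v = (2 : ℂ)⁻¹ • ∑ k ∈ S, normOrd k (n - k) v := by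
  rw [Lop]
  congr 1
  apply finsum_eq_sum_of_support_subset
  intro k hk
  simp only [Function.mem_support] at hk
  apply Finset.mem_coe.mpr
  apply hS
  have : ¬(k < n - C ∨ max C n < k) := fun hc => hk (normOrd_eq_zero h hC hc)
  push_neg at this
  exact Finset.mem_Icc.mpr ⟨by omega, this.2⟩

lemma Bd.Lop {C : ℤ} {v : FockSpace} (h : Bd C v) (hC : 0 ≤ C) (n : ℤ) :
    Bd (C + |n|) (Lop n v) := by
  rw [Lop_eq_sum h hC n (Finset.Subset.refl _)]
  apply Bd.smul
  apply Bd.sum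
  intro k hk
  obtain ⟨h1, h2⟩ := Finset.mem_Icc.mp hk
  have h3 : n ≤ |n| := le_abs_self n
  have h4 : -n ≤ |n| := neg_le_abs n
  apply (h.normOrd k (n - k)).mono
  rcases le_total C n with hcn | hcn
  · rw [max_eq_right hcn] at h2
    exact max_le (max_le (by omega) (by omega)) (by omega)
  · rw [max_eq_left hcn] at h2
    exact max_le (max_le (by omega) (by omega)) (by omega)

lemma Lop_smul {C : ℤ} {v : FockSpace} (h : Bd C v) (hC : 0 ≤ C) (n : ℤ) (c : ℂ) :
    Lop n (c • v) = c • Lop n v := by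
  rw [Lop_eq_sum (h.smul c) hC n (Finset.Subset.refl _),
    Lop_eq_sum h hC n (Finset.Subset.refl _)]
  have : ∑ k ∈ Finset.Icc (n - C) (max C n), normOrd k (n - k) (c • v)
      = c • ∑ k ∈ Finset.Icc (n - C) (max C n), normOrd k (n - k) v := by
    rw [Finset.smul_sum]
    exact Finset.sum_congr rfl fun k _ => map_smul _ _ _
  rw [this, smul_comm]

lemma Lop_sum {ι : Type*} (T : Finset ι) (f : ι → FockSpace) {C : ℤ} (hC : 0 ≤ C)
    (h : ∀ i ∈ T, Bd C (f i)) (n : ℤ) :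
    Lop n (∑ i ∈ T, f i) = ∑ i ∈ T, Lop n (f i) := by
  rw [Lop_eq_sum (Bd.sum h) hC n (Finset.Subset.refl _)]
  have : ∀ k : ℤ, normOrd k (n - k) (∑ i ∈ T, f i) = ∑ i ∈ T, normOrd k (n - k) (f i) :=
    fun k => map_sum _ _ _
  simp_rw [this]
  rw [Finset.sum_comm, Finset.smul_sum]
  exact Finset.sum_congr rfl fun i hi => (Lop_eq_sum (h i hi) hC n (Finset.Subset.refl _)).symm

lemma exists_Bd (v : FockSpace) : ∃ C : ℤ, 0 ≤ C ∧ Bd C v := by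
  refine ⟨((v.vars.sup (fun i => (i : ℕ)) : ℕ) : ℤ), Int.natCast_nonneg _, ?_⟩
  intro j hj
  have hj0 : 0 < j := lt_of_le_of_lt (Int.natCast_nonneg _) hj
  rw [dOp_of_pos hj0]
  erw [pderiv_eq_zero_of_notMem_vars]
  rw [smul_zero]
  intro hmem
  have hle : ((⟨j.toNat, by omega⟩ : ℕ+) : ℕ) ≤ v.vars.sup (fun i => (i : ℕ)) :=
    Finset.le_sup hmem
  simp only [PNat.mk_coe] at hle
  omega
lemma dOp_dOp_dOp_comm (p q a : ℤ) (v : FockSpace) :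
    dOp p (dOp q (dOp a v)) - dOp a (dOp p (dOp q v))
      = (if q + a = 0 then (q : ℂ) else 0) • dOp p v
        + (if p + a = 0 then (p : ℂ) else 0) • dOp q v := by
  have e1 := congrArg (dOp p) (dOp_comm q a v)
  rw [map_add, map_smul] at e1
  have e2 := dOp_comm p a (dOp q v)
  rw [e1, e2]
  abel

lemma normOrd_dOp_comm (x y a : ℤ) (v : FockSpace) :
    normOrd x y (dOp a v) - dOp a (normOrd x y v)
      = (if y + a = 0 then (y : ℂ) else 0) • dOp x v
        + (if x + a = 0 then (x : ℂ) else 0) • dOp y v := by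
  by_cases hy : 0 ≤ y
  · rw [normOrd_apply_of_nonneg hy, normOrd_apply_of_nonneg hy]
    exact dOp_dOp_dOp_comm x y a v
  · push_neg at hy
    rw [normOrd_apply_of_neg hy, normOrd_apply_of_neg hy, dOp_dOp_dOp_comm y x a v, add_comm]

lemma Lop_dOp_comm {C : ℤ} {v : FockSpace} (h : Bd C v) (hC : 0 ≤ C) (m a : ℤ) :
    Lop m (dOp a v) - dOp a (Lop m v) = (-(a : ℂ)) • dOp (m + a) v := by
  set C' : ℤ := max C (-a) with hC'def
  have hC' : 0 ≤ C' := le_trans hC (le_max_left _ _)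
  set S : Finset ℤ :=
    Finset.Icc (min (m - C') (-(|a| + |m|))) (max (max C' m) (|a| + |m|)) with hSdef
  have habs1 : a ≤ |a| := le_abs_self a
  have habs2 : -a ≤ |a| := neg_le_abs a
  have habs3 : m ≤ |m| := le_abs_self m
  have habs4 : -m ≤ |m| := neg_le_abs m
  have hS : Finset.Icc (m - C') (max C' m) ⊆ S := by
    apply Finset.Icc_subset_Icc
    · exact min_le_left _ _
    · exact le_max_left _ _
  have hma : m + a ∈ S := by
    rw [hSdef, Finset.mem_Icc]
    constructor
    · exact le_trans (min_le_right _ _) (by omega)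
    · exact le_trans (by omega) (le_max_right _ _)
  have hna : -a ∈ S := by
    rw [hSdef, Finset.mem_Icc]
    constructor
    · exact le_trans (min_le_right _ _) (by omega)
    · exact le_trans (by omega) (le_max_right _ _)
  rw [Lop_eq_sum (h.dOp a) hC' m hS, Lop_eq_sum (h.mono (le_max_left C (-a))) hC' m hS]
  rw [map_smul, map_sum, ← smul_sub, ← Finset.sum_sub_distrib]
  have hterm : ∀ k ∈ S, normOrd k (m - k) (dOp a v) - dOp a (normOrd k (m - k) v)
      = (if k = m + a then (-(a:ℂ)) • dOp k v else 0)
        + (if k = -a then (-(a:ℂ)) • dOp (m - k) v else 0) := by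
    intro k _
    rw [normOrd_dOp_comm k (m - k) a v]
    congr 1
    · by_cases hk : k = m + a
      · rw [if_pos (by omega), if_pos hk]
        congr 1
        have : m - k = -a := by omega
        rw [this]
        push_cast
        ring
      · rw [if_neg (by omega), if_neg hk, zero_smul]
    · by_cases hk : k = -a
      · rw [if_pos (by omega), if_pos hk]
        congr 1
        have : k = -a := hk
        rw [this]
        push_cast
        ring
      · rw [if_neg (by omega), if_neg hk, zero_smul]
  rw [Finset.sum_congr rfl hterm, Finset.sum_add_distrib,
    Finset.sum_ite_eq' S (m + a) (fun k => (-(a:ℂ)) • dOp k v),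
    Finset.sum_ite_eq' S (-a) (fun k => (-(a:ℂ)) • dOp (m - k) v),
    if_pos hma, if_pos hna]
  rw [show m - -a = m + a by ring, ← add_smul, smul_smul]
  congr 1
  ring

lemma Lop_dOp_dOp_comm {C : ℤ} {v : FockSpace} (h : Bd C v) (hC : 0 ≤ C) (m x y : ℤ) :
    Lop m (dOp x (dOp y v)) - dOp x (dOp y (Lop m v))
      = (-(x : ℂ)) • dOp (m + x) (dOp y v) + (-(y : ℂ)) • dOp x (dOp (m + y) v) := by
  have h1 := Lop_dOp_comm (h.dOp y) (le_trans hC (le_max_left _ _)) m x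
  have h2 := congrArg (dOp x) (Lop_dOp_comm h hC m y)
  rw [map_sub, map_smul] at h2
  calc Lop m (dOp x (dOp y v)) - dOp x (dOp y (Lop m v))
      = (Lop m (dOp x (dOp y v)) - dOp x (Lop m (dOp y v)))
        + (dOp x (Lop m (dOp y v)) - dOp x (dOp y (Lop m v))) := by abel
    _ = (-(x : ℂ)) • dOp (m + x) (dOp y v) + (-(y : ℂ)) • dOp x (dOp (m + y) v) := by
        rw [h1, h2]

noncomputable def eps (m n k : ℤ) : ℂ :=
  if m + n = 0 then
    (if 0 < k ∧ k ≤ n then (k : ℂ) * ((k : ℂ) - (n : ℂ))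
     else if n < k ∧ k < 0 then -((k : ℂ) * ((k : ℂ) - (n : ℂ))) else 0)
  else 0

lemma key_comm {C : ℤ} {v : FockSpace} (h : Bd C v) (hC : 0 ≤ C) (m n k : ℤ) :
    Lop m (normOrd k (n - k) v) - normOrd k (n - k) (Lop m v)
      = (-(k : ℂ)) • normOrd (m + k) (n - k) v
        + (-((n : ℂ) - (k : ℂ))) • normOrd k (m + n - k) v + eps m n k • v := by
  by_cases hb : 0 ≤ n - k
  · have hcc1 : cc (m + k) (n - k) = 0 := by rw [cc, if_neg (by omega)]
    have hcc2 : (-((n : ℂ) - (k : ℂ))) * cc k (m + n - k) = eps m n k := by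
      rw [cc, eps]
      by_cases h0 : m + n = 0
      · by_cases hk : 0 < k
        · rw [if_pos ⟨by omega, by omega⟩, if_pos h0, if_pos ⟨hk, by omega⟩]
          ring
        · rw [if_neg (by omega), mul_zero, if_pos h0, if_neg (by omega), if_neg (by omega)]
      · rw [if_neg (by omega), mul_zero, if_neg h0]
    rw [normOrd_apply_of_nonneg hb, normOrd_apply_of_nonneg hb,
      Lop_dOp_dOp_comm h hC m k (n - k), show m + (n - k) = m + n - k by ring,
      dOp_dOp_eq (m + k) (n - k) v, dOp_dOp_eq k (m + n - k) v, hcc1, zero_smul, add_zero]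
    push_cast
    rw [smul_add, smul_smul, hcc2]
    abel
  · push_neg at hb
    have hcc1 : cc (n - k) (m + k) = 0 := by rw [cc, if_neg (by omega)]
    have hcc2 : (-((n : ℂ) - (k : ℂ))) * cc (m + n - k) k = eps m n k := by
      rw [cc, eps]
      by_cases h0 : m + n = 0
      · by_cases hk : k < 0
        · rw [if_pos ⟨by omega, hk⟩, if_pos h0, if_neg (by omega), if_pos ⟨by omega, hk⟩]
          rw [show m + n - k = -k by omega]
          push_cast
          ring
        · rw [if_neg (by omega), mul_zero, if_pos h0, if_neg (by omega), if_neg (by omega)]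
      · rw [if_neg (by omega), mul_zero, if_neg h0]
    rw [normOrd_apply_of_neg hb, normOrd_apply_of_neg hb,
      Lop_dOp_dOp_comm h hC m (n - k) k, show m + (n - k) = m + n - k by ring,
      dOp_dOp_eq (m + n - k) k v, dOp_dOp_eq (n - k) (m + k) v, hcc1, zero_smul, add_zero,
      normOrd_symm (m + n - k) k v, normOrd_symm (n - k) (m + k) v]
    push_cast
    rw [smul_add, smul_smul, hcc2]
    abel
lemma icc_insert_top (N : ℕ) :
    Finset.Icc (1:ℤ) ((N+1:ℕ):ℤ) = insert ((N:ℤ)+1) (Finset.Icc (1:ℤ) (N:ℤ)) := by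
  ext x
  simp only [Finset.mem_Icc, Finset.mem_insert]
  push_cast
  omega

lemma icc_insert_bot (N : ℕ) :
    Finset.Icc (-((N+1:ℕ):ℤ)) (-1) = insert (-((N:ℤ)+1)) (Finset.Icc (-(N:ℤ)) (-1)) := by
  ext x
  simp only [Finset.mem_Icc, Finset.mem_insert]
  push_cast
  omega

lemma sum_Icc_pos_id (N : ℕ) :
    ∑ k ∈ Finset.Icc (1:ℤ) (N:ℤ), (k:ℂ) = (N:ℂ)*((N:ℂ)+1)/2 := by
  induction N with
  | zero =>
      rw [show ((0:ℕ):ℤ) = 0 by simp, Finset.Icc_eq_empty (by norm_num)]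
      simp
  | succ N ih =>
      rw [icc_insert_top, Finset.sum_insert (by simp only [Finset.mem_Icc]; omega), ih]
      push_cast
      ring

lemma sum_Icc_pos_sq (N : ℕ) :
    ∑ k ∈ Finset.Icc (1:ℤ) (N:ℤ), (k:ℂ)^2 = (N:ℂ)*((N:ℂ)+1)*(2*(N:ℂ)+1)/6 := by
  induction N with
  | zero =>
      rw [show ((0:ℕ):ℤ) = 0 by simp, Finset.Icc_eq_empty (by norm_num)]
      simp
  | succ N ih =>
      rw [icc_insert_top, Finset.sum_insert (by simp only [Finset.mem_Icc]; omega), ih]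
      push_cast
      ring

lemma sum_Icc_neg_id (N : ℕ) :
    ∑ k ∈ Finset.Icc (-(N:ℤ)) (-1), (k:ℂ) = -((N:ℂ)*((N:ℂ)+1)/2) := by
  induction N with
  | zero =>
      rw [show ((0:ℕ):ℤ) = 0 by simp, show -(0:ℤ) = 0 by ring, Finset.Icc_eq_empty (by norm_num)]
      simp
  | succ N ih =>
      rw [icc_insert_bot, Finset.sum_insert (by simp only [Finset.mem_Icc]; omega), ih]
      push_cast
      ring

lemma sum_Icc_neg_sq (N : ℕ) :
    ∑ k ∈ Finset.Icc (-(N:ℤ)) (-1), (k:ℂ)^2 = (N:ℂ)*((N:ℂ)+1)*(2*(N:ℂ)+1)/6 := by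
  induction N with
  | zero =>
      rw [show ((0:ℕ):ℤ) = 0 by simp, show -(0:ℤ) = 0 by ring, Finset.Icc_eq_empty (by norm_num)]
      simp
  | succ N ih =>
      rw [icc_insert_bot, Finset.sum_insert (by simp only [Finset.mem_Icc]; omega), ih]
      push_cast
      ring

lemma eps_sum (m n : ℤ) {S : Finset ℤ} (hS : Finset.Icc (-|n|) |n| ⊆ S) :
    ∑ k ∈ S, eps m n k = if m + n = 0 then ((m:ℂ)^3 - (m:ℂ))/6 else 0 := by
  have habs1 : n ≤ |n| := le_abs_self n
  have habs2 : -n ≤ |n| := neg_le_abs n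
  by_cases h0 : m + n = 0
  swap
  · rw [if_neg h0]
    exact Finset.sum_eq_zero fun k _ => by rw [eps, if_neg h0]
  rw [if_pos h0]
  rcases lt_trichotomy n 0 with hn | hn | hn
  · -- n < 0, m = -n > 0
    set P : ℕ := (-n).toNat with hPdef
    have hP : ((P:ℕ):ℤ) = -n := by omega
    have hsub : Finset.Icc (n+1) (-1) ⊆ S := by
      apply le_trans ?_ hS
      apply Finset.Icc_subset_Icc <;> omega
    rw [← Finset.sum_subset hsub (fun k _ hk => ?_)]
    swap
    · rw [eps, if_pos h0, if_neg (by omega), if_neg (by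
        simp only [Finset.mem_Icc] at hk; omega)]
    have hcongr : ∀ k ∈ Finset.Icc (n+1) (-1),
        eps m n k = -((k:ℂ)^2) + (n:ℂ) * (k:ℂ) := by
      intro k hk
      simp only [Finset.mem_Icc] at hk
      rw [eps, if_pos h0, if_neg (by omega), if_pos ⟨by omega, by omega⟩]
      ring
    have hicc : Finset.Icc (n+1) (-1) = Finset.Icc (-((P-1:ℕ):ℤ)) (-1) := by
      congr 1
      omega
    have h3 : ∑ x ∈ Finset.Icc (-((P-1:ℕ):ℤ)) (-1), (-((x:ℂ)^2) + (n:ℂ) * (x:ℂ))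
        = -(∑ x ∈ Finset.Icc (-((P-1:ℕ):ℤ)) (-1), (x:ℂ)^2)
          + (n:ℂ) * ∑ x ∈ Finset.Icc (-((P-1:ℕ):ℤ)) (-1), (x:ℂ) := by
      rw [Finset.sum_add_distrib, ← Finset.mul_sum, Finset.sum_neg_distrib]
    rw [Finset.sum_congr rfl hcongr, hicc, h3, sum_Icc_neg_sq (P-1), sum_Icc_neg_id (P-1)]
    have hmQ : (m:ℂ) = ((P-1:ℕ):ℂ) + 1 := by
      rw [show m = ((P-1:ℕ):ℤ) + 1 by omega]
      push_cast
      ring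
    have hnQ : (n:ℂ) = -(((P-1:ℕ):ℂ) + 1) := by
      rw [show n = -(((P-1:ℕ):ℤ) + 1) by omega]
      push_cast
      ring
    rw [hmQ, hnQ]
    ring
  · -- n = 0, m = 0
    subst hn
    rw [show m = 0 by omega] at *
    norm_num
    exact Finset.sum_eq_zero fun k _ => by
      rw [eps, if_pos (by norm_num : (0:ℤ) + 0 = 0), if_neg (by omega), if_neg (by omega)]
  · -- n > 0
    set P : ℕ := n.toNat with hPdef
    have hP : ((P:ℕ):ℤ) = n := by omega
    have hsub : Finset.Icc (1:ℤ) n ⊆ S := by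
      apply le_trans ?_ hS
      apply Finset.Icc_subset_Icc <;> omega
    rw [← Finset.sum_subset hsub (fun k _ hk => ?_)]
    swap
    · rw [eps, if_pos h0, if_neg (by
        simp only [Finset.mem_Icc] at hk; omega), if_neg (by omega)]
    have hcongr : ∀ k ∈ Finset.Icc (1:ℤ) n,
        eps m n k = (k:ℂ)^2 + (-(n:ℂ)) * (k:ℂ) := by
      intro k hk
      simp only [Finset.mem_Icc] at hk
      rw [eps, if_pos h0, if_pos ⟨by omega, by omega⟩]
      ring
    rw [Finset.sum_congr rfl hcongr, Finset.sum_add_distrib, ← Finset.mul_sum]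
    rw [show n = ((P:ℕ):ℤ) by omega, sum_Icc_pos_sq, sum_Icc_pos_id]
    have hm : (m:ℂ) = -((P:ℕ):ℂ) := by
      rw [show m = -((P:ℕ):ℤ) by omega]
      push_cast
      ring
    have hnc : (n:ℂ) = ((P:ℕ):ℂ) := by
      rw [show n = ((P:ℕ):ℤ) by omega]
      push_cast
      ring
    rw [hm]
    push_cast
    ring
lemma sum_scaled_normOrd_eq {C : ℤ} {v : FockSpace} (h : Bd C v) (hC : 0 ≤ C) (M : ℤ)
    (c : ℤ → ℂ) {T : Finset ℤ} (hT : Finset.Icc (M - C) (max C M) ⊆ T) :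
    ∑ k ∈ T, c k • normOrd k (M - k) v
      = ∑ k ∈ Finset.Icc (M - C) (max C M), c k • normOrd k (M - k) v := by
  symm
  apply Finset.sum_subset hT
  intro k _ hk
  simp only [Finset.mem_Icc] at hk
  rw [normOrd_eq_zero h hC (by omega : k < M - C ∨ max C M < k), smul_zero]


/-- **The free boson has central charge 1**: in the Fock representation of the Heisenberg
algebra `[d[m], d[n]] = m δ_{m+n,0}`, the operators `L[n] = (1/2) ∑_k :d[k]d[n-k]:` satisfy
the Virasoro relations `[L[m], L[n]] = (m-n) L[m+n] + (1/12)(m³-m) δ_{m+n,0}` with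
central charge 1. -/
theorem virasoro_of_one_free_boson (m n : ℤ) (v : FockSpace) :
    Lop m (Lop n v) - Lop n (Lop m v) =
      ((m : ℂ) - (n : ℂ)) • Lop (m + n) v +
        ((1 / 12 : ℂ) * ((m : ℂ) ^ 3 - (m : ℂ))) • (if m + n = 0 then v else 0) := by
  obtain ⟨C, hC0, hv⟩ := exists_Bd v
  have habs1 : m ≤ |m| := le_abs_self m
  have habs2 : -m ≤ |m| := neg_le_abs m
  have habs3 : n ≤ |n| := le_abs_self n
  have habs4 : -n ≤ |n| := neg_le_abs n
  set R : ℤ := C + |m| + |n| + 1 with hRdef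
  set S : Finset ℤ := Finset.Icc (-R) R with hSdef
  have hR0 : 0 ≤ R := by omega
  have hS1 : Finset.Icc (n - C) (max C n) ⊆ S :=
    Finset.Icc_subset_Icc (by omega) (max_le (by omega) (by omega))
  have hSn' : Finset.Icc (n - (C + |m|)) (max (C + |m|) n) ⊆ S :=
    Finset.Icc_subset_Icc (by omega) (max_le (by omega) (by omega))
  have hScore : Finset.Icc (m + n - C) (max C (m + n)) ⊆ S :=
    Finset.Icc_subset_Icc (by omega) (max_le (by omega) (by omega))
  have hScoreShift : Finset.Icc (m + n - C) (max C (m + n)) ⊆ Finset.Icc (-R + m) (R + m) :=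
    Finset.Icc_subset_Icc (by omega) (max_le (by omega) (by omega))
  have hSeps : Finset.Icc (-|n|) |n| ⊆ S :=
    Finset.Icc_subset_Icc (by omega) (by omega)
  have hBm : Bd (C + |m|) (Lop m v) := hv.Lop hC0 m
  have hBm0 : (0:ℤ) ≤ C + |m| := by omega
  -- the summands of `Lop n v` over S have a common bound
  have hterm : ∀ k ∈ S, Bd (C + R + |n|) (normOrd k (n - k) v) := by
    intro k hk
    obtain ⟨hk1, hk2⟩ := Finset.mem_Icc.mp hk
    exact (hv.normOrd k (n - k)).mono
      (max_le (max_le (by omega) (by omega)) (by omega))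
  have hC2 : (0:ℤ) ≤ C + R + |n| := by omega
  have e1 : Lop m (Lop n v) = (2:ℂ)⁻¹ • ∑ k ∈ S, Lop m (normOrd k (n - k) v) := by
    rw [Lop_eq_sum hv hC0 n hS1, Lop_smul (Bd.sum hterm) hC2 m, Lop_sum S _ hC2 hterm m]
  have e2 : Lop n (Lop m v) = (2:ℂ)⁻¹ • ∑ k ∈ S, normOrd k (n - k) (Lop m v) :=
    Lop_eq_sum hBm hBm0 n hSn'
  have e3 : Lop m (Lop n v) - Lop n (Lop m v)
      = (2:ℂ)⁻¹ • ∑ k ∈ S,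
          (Lop m (normOrd k (n - k) v) - normOrd k (n - k) (Lop m v)) := by
    rw [e1, e2, ← smul_sub, ← Finset.sum_sub_distrib]
  rw [e3, Finset.sum_congr rfl (fun k _ => key_comm hv hC0 m n k),
    Finset.sum_add_distrib, Finset.sum_add_distrib]
  -- reindex the first sum
  have eA : ∑ k ∈ S, (-(k:ℂ)) • normOrd (m + k) (n - k) v
      = ∑ k ∈ S, ((m:ℂ) - (k:ℂ)) • normOrd k (m + n - k) v := by
    have h1 : ∑ k ∈ S, (-(k:ℂ)) • normOrd (m + k) (n - k) v
        = ∑ k ∈ Finset.Icc (-R + m) (R + m), ((m:ℂ) - (k:ℂ)) • normOrd k (m + n - k) v := by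
      apply Finset.sum_nbij' (fun k => k + m) (fun k => k - m)
      · intro a ha
        simp only [hSdef, Finset.mem_Icc] at ha ⊢
        omega
      · intro a ha
        simp only [hSdef, Finset.mem_Icc] at ha ⊢
        omega
      · intro a _
        ring
      · intro a _
        ring
      · intro a _
        rw [show m + n - (a + m) = n - a by ring, show a + m = m + a by ring]
        congr 1
        push_cast
        ring
    rw [h1, sum_scaled_normOrd_eq hv hC0 (m + n) _ hScoreShift,
      ← sum_scaled_normOrd_eq hv hC0 (m + n) _ hScore]
  rw [eA]
  have hAB : (∑ k ∈ S, ((m:ℂ) - (k:ℂ)) • normOrd k (m + n - k) v)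
      + ∑ k ∈ S, (-((n:ℂ) - (k:ℂ))) • normOrd k (m + n - k) v
      = ((m:ℂ) - (n:ℂ)) • ∑ k ∈ S, normOrd k (m + n - k) v := by
    rw [← Finset.sum_add_distrib, Finset.smul_sum]
    apply Finset.sum_congr rfl
    intro k _
    rw [← add_smul]
    congr 1
    ring
  rw [hAB]
  have hE : ∑ k ∈ S, eps m n k • v
      = (if m + n = 0 then ((m:ℂ)^3 - (m:ℂ))/6 else 0) • v := by
    rw [← Finset.sum_smul, eps_sum m n hSeps]
  rw [hE, Lop_eq_sum hv hC0 (m + n) hScore]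
  by_cases h0 : m + n = 0
  · rw [if_pos h0, if_pos h0]
    rw [smul_add, smul_smul, smul_smul, smul_smul]
    congr 1
    · rw [mul_comm]
    · congr 1
      ring
  · rw [if_neg h0, if_neg h0, zero_smul, add_zero, smul_zero, add_zero,
      smul_smul, smul_smul, mul_comm]
end

section
/- For the Heisenberg Lie algebra with brackets [d[m], d[n]] = m δ_{m+n,0} K, [d[m], K] = 0, the Fock representation V = ℂ[x₁, x₂, ...] with d[-n] ↦ multiplication by x_n, d[n] ↦ n ∂/∂x_n for n > 0, d[0] ↦ 0, K ↦ 1, is an irreducible representation. -/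
open MvPolynomial

lemma coeff_pderiv (i : ℕ+) (p : FockSpace) (m : ℕ+ →₀ ℕ) :
    coeff m (pderiv i p) = ((m i : ℂ) + 1) * coeff (m + Finsupp.single i 1) p := by
  induction p using MvPolynomial.induction_on' with
  | monomial s a =>
    rw [pderiv_monomial, coeff_monomial, coeff_monomial]
    by_cases h : s = m + Finsupp.single i 1
    · subst h
      have h1 : m + Finsupp.single i 1 - Finsupp.single i 1 = m := by
        ext x; simp [Finsupp.single_apply]
      rw [if_pos h1, if_pos rfl]
      simp [Finsupp.single_apply]
      ring
    · rw [if_neg h]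
      by_cases h2 : s - Finsupp.single i 1 = m
      · rw [if_pos h2]
        have hsi : s i = 0 := by
          by_contra hsi
          apply h
          ext x
          have hx := DFunLike.congr_fun h2 x
          rcases eq_or_ne x i with rfl | hne
          · simp [Finsupp.single_apply] at hx ⊢; omega
          · simp [Finsupp.single_apply, hne, Ne.symm hne] at hx ⊢; omega
        simp [hsi]
      · rw [if_neg h2]
        ring
  | add p q hp hq => simp [hp, hq]; ring

lemma pderiv_mem (W : Submodule ℂ FockSpace)
    (hinv : ∀ n : ℤ, ∀ v ∈ W, dOp n v ∈ W) (k : ℕ+) {p : FockSpace} (hp : p ∈ W) :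
    pderiv k p ∈ W := by
  have h := hinv (k : ℕ+) p hp
  have hk : (0 : ℤ) < (k : ℕ+) := by exact_mod_cast k.pos
  rw [dOp, dif_pos hk] at h
  have hkey : (⟨((k : ℤ)).toNat, by omega⟩ : ℕ+) = k := by
    ext; simp; rfl
  rw [hkey] at h
  have hkc : ((((k : ℕ+) : ℤ)) : ℂ) ≠ 0 := by
    exact_mod_cast k.ne_zero
  have h2 := W.smul_mem ((((k : ℕ+) : ℤ)) : ℂ)⁻¹ h
  have h3 : ((((k : ℕ+) : ℤ)) : ℂ)⁻¹ • ((((k : ℕ+) : ℤ)) : ℂ) • pderiv k p ∈ W := h2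
  rwa [smul_smul, inv_mul_cancel₀ hkc, one_smul] at h3

lemma mulX_mem (W : Submodule ℂ FockSpace)
    (hinv : ∀ n : ℤ, ∀ v ∈ W, dOp n v ∈ W) (k : ℕ+) {p : FockSpace} (hp : p ∈ W) :
    X k * p ∈ W := by
  have h := hinv (-(k : ℕ+)) p hp
  have hkpos : (0:ℤ) < (k:ℕ+) := by exact_mod_cast k.pos
  have h1 : ¬ (0 : ℤ) < -(k : ℕ+) := by omega
  have h2 : (-(k : ℕ+) : ℤ) < 0 := by omega
  rw [dOp, dif_neg h1, dif_pos h2] at h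
  have hkey : (⟨(-(-(k:ℕ+):ℤ)).toNat, by omega⟩ : ℕ+) = k := by
    ext; simp; rfl
  rw [hkey] at h
  simpa [LinearMap.mulLeft_apply] using h

lemma one_mem_of_ne (W : Submodule ℂ FockSpace)
    (hinv : ∀ n : ℤ, ∀ v ∈ W, dOp n v ∈ W) :
    ∀ N : ℕ, ∀ p : FockSpace, p ∈ W → p ≠ 0 → p.totalDegree ≤ N →
      (1 : FockSpace) ∈ W := by
  intro N
  induction N with
  | zero =>
    intro p hp hne hdeg
    have h0 : p.totalDegree = 0 := Nat.le_zero.mp hdeg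
    have hC : p = C (coeff 0 p) := by
      ext m
      by_cases hm : m = 0
      · subst hm; simp
      · rw [coeff_C, if_neg (Ne.symm hm)]
        by_contra hc
        have hms : m ∈ p.support := by
          simpa [mem_support_iff] using hc
        have := (totalDegree_eq_zero_iff ℕ+ p).mp h0 m hms
        exact hm (Finsupp.ext fun x => this x)
    have hc0 : coeff 0 p ≠ 0 := fun h => hne (by rw [hC, h, map_zero])
    obtain ⟨a, ha, rfl⟩ : ∃ a : ℂ, a ≠ 0 ∧ p = C a := ⟨coeff 0 p, hc0, hC⟩
    have key : (a⁻¹ • (C a : FockSpace)) = 1 := by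
      rw [smul_eq_C_mul, ← C_mul, inv_mul_cancel₀ ha, C_1]
    rw [← key]
    exact W.smul_mem _ hp
  | succ N ih =>
    intro p hp hne hdeg
    by_cases hle : p.totalDegree ≤ N
    · exact ih p hp hne hle
    have hdegeq : p.totalDegree = N + 1 := by omega
    have hsupp : p.support.Nonempty := support_nonempty.mpr hne
    obtain ⟨d, hd, hdeq⟩ := Finset.exists_mem_eq_sup p.support hsupp
      (fun m => m.sum fun _ e => e)
    have hdsum : (d.sum fun _ e => e) = N + 1 := by
      unfold totalDegree at hdegeq
      rw [← hdeq]
      exact hdegeq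
    obtain ⟨k, hk⟩ : ∃ k, d k ≠ 0 := by
      by_contra hc
      push_neg at hc
      have : (d.sum fun _ e => e) = 0 := Finset.sum_eq_zero fun x _ => hc x
      omega
    set m := d - Finsupp.single k 1 with hm
    have hmd : m + Finsupp.single k 1 = d := by
      ext x
      rcases eq_or_ne x k with rfl | hx
      · simp [hm]; omega
      · simp [hm, Finsupp.single_apply, Ne.symm hx]
    have hcoeff : coeff m (pderiv k p) = ((m k : ℂ) + 1) * coeff d p := by
      rw [coeff_pderiv, hmd]
    have hdne : coeff d p ≠ 0 := mem_support_iff.mp hd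
    have hpne : pderiv k p ≠ 0 := by
      intro h
      rw [h, coeff_zero] at hcoeff
      rcases mul_eq_zero.mp hcoeff.symm with h' | h'
      · exact Nat.cast_add_one_ne_zero (m k) h'
      · exact hdne h'
    have hdegle : (pderiv k p).totalDegree ≤ N := by
      apply Finset.sup_le
      intro b hb
      have hbc : coeff b (pderiv k p) ≠ 0 := mem_support_iff.mp hb
      rw [coeff_pderiv] at hbc
      have h1 : coeff (b + Finsupp.single k 1) p ≠ 0 := by
        intro h; rw [h, mul_zero] at hbc; exact hbc rfl
      have h2 : ((b + Finsupp.single k 1).sum fun _ e => e) ≤ N + 1 := by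
        rw [← hdegeq]
        exact le_totalDegree (mem_support_iff.mpr h1)
      have h3 : ((b + Finsupp.single k 1).sum fun _ e => e)
          = (b.sum fun _ e => e) + 1 := by
        rw [Finsupp.sum_add_index (by simp) (by simp)]
        simp [Finsupp.sum_single_index]
      omega
    exact ih (pderiv k p) (pderiv_mem W hinv k hp) hpne hdegle

/-- **Irreducibility of the Fock representation of the Heisenberg algebra**:
every subspace of the Fock space invariant under all the operators `d[n]` (the central
element `K` acts as the identity) is either zero or the whole space. -/
theorem fock_representation_irreducible
    (W : Submodule ℂ FockSpace)
    (hinv : ∀ n : ℤ, ∀ v ∈ W, dOp n v ∈ W)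
    (hne : W ≠ ⊥) : W = ⊤ := by
  obtain ⟨p, hp, hpne⟩ := Submodule.exists_mem_ne_zero_of_ne_bot hne
  have h1 : (1 : FockSpace) ∈ W :=
    one_mem_of_ne W hinv p.totalDegree p hp hpne le_rfl
  rw [eq_top_iff]
  intro q hq
  clear hq
  induction q using MvPolynomial.induction_on with
  | C a =>
    have : (C a : FockSpace) = a • 1 := by simp [Algebra.smul_def]
    rw [this]
    exact W.smul_mem _ h1
  | add f g hf hg => exact W.add_mem hf hg
  | mul_X f k hf =>
    have := mulX_mem W hinv k hf
    rwa [mul_comm] at this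
end
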